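/- Let T be a tree with order p and diameter d ≥ 2, and let ε = ε(T). If rn(T) = (p-1)(d+ε) - 2L(T) + ε, then there exists a linear order u_0, u_1, ..., u_{p-1} of the vertices of T such that (a) u_0 = w and u_{p-1} ∈ N(w) when W(T) = {w}, and {u_0, u_{p-1}} = {w, w'} when W(T) = {w, w'}; and (b) for all 0 ≤ i < j ≤ p-1, d(u_i, u_j) ≥ Σ_{t=i}^{j-1}(L(u_t) + L(u_{t+1})) - (j-i)(d+ε) + (d+1). -/

import Mathlib

/-!
In a tree the weight centers are adjacent, so passing through a weight center (or through the edge
joining the two) gives `d(u, v) ≤ L(u) + L(v) + 1 - ε` for all vertices `u, v`. List the vertices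
as `u₀, …, u_{p-1}` in increasing order of an optimal radio labeling `f`. The radio condition for
consecutive vertices gives `f(u_{t+1}) - f(u_t) ≥ d + ε - L(u_t) - L(u_{t+1})`, and these bounds
add up to `(p-1)(d+ε) - 2L(T) + L(u₀) + L(u_{p-1})`, which is at least the assumed value of
`rn(T)` since `L(u₀) + L(u_{p-1}) ≥ ε`. So every gap is tight: `L(u₀) + L(u_{p-1}) = ε`, which
gives (a) after possibly reversing the order, and `f(u_j) - f(u_i)` equals the sum of the bounds
between `i` and `j`, which turns the radio condition for `u_i, u_j` into (b).
-/

namespace Radio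

variable {V : Type*}

/-- The span of a labeling `f`: the maximum of `|f u - f v|` over all pairs of vertices. -/
def span [Fintype V] (f : V → ℕ) : ℕ :=
  Finset.univ.sup fun p : V × V => ((f p.1 : ℤ) - (f p.2 : ℤ)).natAbs

/-- `f` is a radio labeling of `G`: `|f u - f v| ≥ diam G + 1 - d(u,v)` for all distinct `u, v`. -/
def IsRadioLabeling [Fintype V] (G : SimpleGraph V) (f : V → ℕ) : Prop :=
  ∀ u v : V, u ≠ v → G.diam + 1 ≤ G.dist u v + ((f u : ℤ) - (f v : ℤ)).natAbs

/-- The radio number of `G`: the minimum span of a radio labeling of `G`. -/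
noncomputable def radioNumber [Fintype V] (G : SimpleGraph V) : ℕ :=
  sInf { n | ∃ f : V → ℕ, IsRadioLabeling G f ∧ span f = n }

/-- The weight of `G` from a vertex `v`: `w_G(v) = ∑_u d(u, v)`. -/
noncomputable def weightFrom [Fintype V] (G : SimpleGraph V) (v : V) : ℕ :=
  ∑ u : V, G.dist u v

/-- The weight of `G`: the minimum of `w_G(v)` over all vertices `v`. -/
noncomputable def weight [Fintype V] (G : SimpleGraph V) : ℕ :=
  sInf (Set.range (weightFrom G))

/-- The set of weight centers of `G`: vertices minimizing `w_G(·)`. -/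
def weightCenters [Fintype V] (G : SimpleGraph V) : Set V :=
  { v | ∀ x : V, weightFrom G v ≤ weightFrom G x }

/-- The level of a vertex `u`: `L(u) = min { d(u, x) : x ∈ W(G) }`. -/
noncomputable def level [Fintype V] (G : SimpleGraph V) (u : V) : ℕ :=
  sInf (G.dist u '' weightCenters G)

/-- The total level of `G`: `L(G) = ∑_u L(u)`. -/
noncomputable def totalLevel [Fintype V] (G : SimpleGraph V) : ℕ :=
  ∑ u : V, level G u

/-- `ε(G) = 1` if `G` has exactly one weight center, and `0` otherwise
(for a tree the other case is exactly that of two adjacent weight centers). -/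
noncomputable def epsilon [Fintype V] (G : SimpleGraph V) : ℕ :=
  if (weightCenters G).ncard = 1 then 1 else 0

end Radio

namespace SimpleGraph

variable {V : Type*} {G : SimpleGraph V}

lemma Walk.dist_add_dist_le_length {u z x : V} (p : G.Walk u z) (hx : x ∈ p.support) :
    G.dist u x + G.dist x z ≤ p.length := by
  classical
  rw [← congrArg Walk.length (p.take_spec hx), Walk.length_append]
  exact add_le_add (dist_le _) (dist_le _)

lemma IsAcyclic.mem_edges_of_adj (hG : G.IsAcyclic) {w a : V} (h : G.Adj w a)
    (p : G.Walk w a) : s(w, a) ∈ p.edges :=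
  isBridge_iff_forall_walk_mem_edges.mp (isAcyclic_iff_forall_adj_isBridge.mp hG h) p

/-- Every walk from `u` to `z` crosses the edge `wa`. -/
lemma IsTree.dist_eq_add_dist_of_adj {w a u z : V} (hT : G.IsTree) (h : G.Adj w a)
    (hu : G.dist u w < G.dist u a) (hz : G.dist z a < G.dist z w) :
    G.dist u z = G.dist u w + 1 + G.dist a z := by
  have hconn := hT.connected
  have hwa : G.dist w a = 1 := dist_eq_one_iff_adj.mpr h
  have hz' : G.dist z w = G.dist z a + 1 := by
    rcases hT.dist_eq_dist_add_one_of_adj z h with h' | h' <;> omega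
  obtain ⟨p, hp⟩ := hconn.exists_walk_length_eq_dist w u
  obtain ⟨q, hq⟩ := hconn.exists_walk_length_eq_dist u z
  obtain ⟨r, hr⟩ := hconn.exists_walk_length_eq_dist z a
  have hwz : G.dist w z ≤ G.dist w a + G.dist a z := hconn.dist_triangle
  have hle : G.dist u z ≤ G.dist u w + G.dist w z := hconn.dist_triangle
  have hedge := hT.isAcyclic.mem_edges_of_adj h ((p.append q).append r)
  simp only [Walk.edges_append, List.mem_append] at hedge
  rcases hedge with (hedge | hedge) | hedge
  · have := p.dist_add_dist_le_length (p.snd_mem_support_of_mem_edges hedge)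
    rw [dist_comm (u := a), dist_comm (u := w) (v := u)] at *
    omega
  · have := q.dist_add_dist_le_length (q.fst_mem_support_of_mem_edges hedge)
    rw [dist_comm (u := w) (v := z), dist_comm (u := a) (v := z)] at *
    omega
  · have := r.dist_add_dist_le_length (r.fst_mem_support_of_mem_edges hedge)
    omega

lemma Connected.exists_adj_dist_add_one_eq (hconn : G.Connected) {x y : V} (hxy : x ≠ y) :
    ∃ a, G.Adj x a ∧ G.dist a y + 1 = G.dist x y := by
  obtain ⟨p, hp⟩ := hconn.exists_walk_length_eq_dist x y
  have hnil : ¬ p.Nil := fun hn => hxy hn.eq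
  refine ⟨p.snd, p.adj_snd hnil, le_antisymm ?_ ?_⟩
  · rw [← hp, ← p.length_tail_add_one hnil]
    exact Nat.add_le_add_right (dist_le _) 1
  · have := dist_eq_one_iff_adj.mpr (p.adj_snd hnil)
    have : G.dist x y ≤ G.dist x p.snd + G.dist p.snd y := hconn.dist_triangle
    omega

end SimpleGraph

namespace Set

variable {α : Type*} {u : ℕ → α} {N : ℕ}

lemma BijOn.existsUnique_lt_add_one (hu : BijOn u (Iic N) univ) (v : α) :
    ∃! i, i < N + 1 ∧ u i = v := by
  obtain ⟨i, hi, rfl⟩ := hu.surjOn (mem_univ v)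
  exact ⟨i, ⟨Nat.lt_succ_of_le hi, rfl⟩,
    fun j hj => hu.injOn (Nat.lt_succ_iff.mp hj.1) hi hj.2⟩

lemma BijOn.reverse_Iic (hu : BijOn u (Iic N) univ) :
    BijOn (fun i => u (N - i)) (Iic N) univ := by
  refine hu.comp (InvOn.bijOn (f' := fun i => N - i) ⟨?_, ?_⟩ ?_ ?_) <;>
    intro i hi <;> simp only [mem_Iic] at hi ⊢ <;> omega

end Set

namespace Radio

open SimpleGraph Finset

variable {V : Type*} [Fintype V] {G : SimpleGraph V}

section WeightCenters

/-- For an edge `wa` of a tree, this is the vertex set of the component of `T - wa` containing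
`w`. -/
noncomputable def closerTo (G : SimpleGraph V) (w a : V) : Finset V :=
  univ.filter fun u => G.dist u w < G.dist u a

lemma mem_closerTo {w a u : V} : u ∈ closerTo G w a ↔ G.dist u w < G.dist u a := by
  simp [closerTo]

lemma card_closerTo_add_card_closerTo (hT : G.IsTree) {w a : V} (h : G.Adj w a) :
    #(closerTo G w a) + #(closerTo G a w) = Fintype.card V := by
  have hnot : closerTo G a w = univ.filter fun u => ¬ G.dist u w < G.dist u a := by
    refine filter_congr fun u _ => ?_
    rcases hT.dist_eq_dist_add_one_of_adj u h with h' | h' <;> omega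
  rw [hnot, closerTo, card_filter_add_card_filter_not, card_univ]

lemma weightFrom_sub_weightFrom (hT : G.IsTree) {w a : V} (h : G.Adj w a) :
    (weightFrom G a : ℤ) - weightFrom G w = #(closerTo G w a) - #(closerTo G a w) := by
  classical
  have hstep : ∀ u, (G.dist u a : ℤ) - G.dist u w =
      (if u ∈ closerTo G w a then 1 else 0) - (if u ∈ closerTo G a w then 1 else 0) := by
    intro u
    simp only [mem_closerTo]
    rcases hT.dist_eq_dist_add_one_of_adj u h with h' | h' <;> split_ifs <;> omega
  simp only [weightFrom, Nat.cast_sum, ← sum_sub_distrib, hstep]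
  simp [sum_sub_distrib]

lemma two_mul_card_closerTo_le (hT : G.IsTree) {w a : V} (hw : w ∈ weightCenters G)
    (h : G.Adj w a) : 2 * #(closerTo G a w) ≤ Fintype.card V := by
  have hdiff := weightFrom_sub_weightFrom hT h
  have hpart := card_closerTo_add_card_closerTo hT h
  have := hw a
  omega

/-- A vertex `b` next to `w'` on the way to `w` sees, on its own side of the edge `w'b`, all of
`w`'s side of the edge `wa` except `a`, which is too small when both are weight centers. -/
lemma dist_le_one_of_mem_weightCenters (hT : G.IsTree) {w w' : V}
    (hw : w ∈ weightCenters G) (hw' : w' ∈ weightCenters G) : G.dist w w' ≤ 1 := by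
  classical
  have hconn := hT.connected
  by_contra! hk
  have hne : w ≠ w' := by rintro rfl; simp at hk
  obtain ⟨a, hwa, ha⟩ := hconn.exists_adj_dist_add_one_eq hne
  obtain ⟨b, hw'b, hb⟩ := hconn.exists_adj_dist_add_one_eq hne.symm
  rw [dist_comm (u := w')] at hb
  have haw : G.dist a w = 1 := dist_eq_one_iff_adj.mpr hwa.symm
  have ha_mem : a ∈ closerTo G a w := mem_closerTo.mpr (by simp [haw])
  have hsub : closerTo G w' b ⊆ (closerTo G a w).erase a := by
    intro u hu
    rw [mem_closerTo] at hu
    have hsep := hT.dist_eq_add_dist_of_adj hw'b hu (by rw [dist_comm (u := w) (v := b)]; omega)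
    have htri : G.dist u a ≤ G.dist u w' + G.dist w' a := hconn.dist_triangle
    rw [dist_comm (u := w') (v := a)] at htri
    refine mem_erase.mpr ⟨?_, mem_closerTo.mpr (by omega)⟩
    rintro rfl
    omega
  have hcard := card_le_card hsub
  rw [card_erase_of_mem ha_mem] at hcard
  have h1 := two_mul_card_closerTo_le hT hw hwa
  have h2 := two_mul_card_closerTo_le hT hw' hw'b
  have h3 := card_closerTo_add_card_closerTo hT hw'b
  have h4 : 1 ≤ #(closerTo G a w) := card_pos.mpr ⟨a, ha_mem⟩
  omega

end WeightCenters

section Level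

lemma weightCenters_nonempty [Nonempty V] : (weightCenters G).Nonempty := by
  obtain ⟨w, -, hw⟩ := exists_min_image univ (weightFrom G) univ_nonempty
  exact ⟨w, fun x => hw x (mem_univ x)⟩

lemma level_le_dist {w : V} (hw : w ∈ weightCenters G) (u : V) : level G u ≤ G.dist u w :=
  Nat.sInf_le ⟨w, hw, rfl⟩

lemma exists_level_eq_dist [Nonempty V] (u : V) :
    ∃ w ∈ weightCenters G, level G u = G.dist u w := by
  obtain ⟨w, hw, hd⟩ := Nat.sInf_mem (weightCenters_nonempty (G := G) |>.image (G.dist u))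
  exact ⟨w, hw, hd.symm⟩

lemma level_eq_zero_iff (hconn : G.Connected) {u : V} :
    level G u = 0 ↔ u ∈ weightCenters G := by
  have := hconn.nonempty
  refine ⟨fun h => ?_, fun h => by simpa using level_le_dist h u⟩
  obtain ⟨w, hw, hd⟩ := exists_level_eq_dist (G := G) u
  rw [h, eq_comm, hconn.dist_eq_zero_iff] at hd
  rwa [hd]

lemma level_eq_dist_of_weightCenters_eq {w : V} (hW : weightCenters G = {w}) (u : V) :
    level G u = G.dist u w := by
  have : Nonempty V := ⟨w⟩
  obtain ⟨w', hw', hd⟩ := exists_level_eq_dist (G := G) u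
  rw [hW, Set.mem_singleton_iff] at hw'
  rw [hd, hw']

lemma epsilon_eq_one {w : V} (hW : weightCenters G = {w}) : epsilon G = 1 := by
  simp [epsilon, hW]

lemma epsilon_eq_zero {w w' : V} (hne : w ≠ w') (hW : weightCenters G = {w, w'}) :
    epsilon G = 0 := by
  simp [epsilon, hW, Set.ncard_pair hne]

lemma epsilon_le_one : epsilon G ≤ 1 := by
  unfold epsilon; split <;> omega

/-- Go through the weight center, or through the edge joining the two weight centers. -/
lemma dist_add_epsilon_le (hT : G.IsTree) (u v : V) :
    G.dist u v + epsilon G ≤ level G u + level G v + 1 := by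
  have hconn := hT.connected
  have := hconn.nonempty
  by_cases hnc : (weightCenters G).ncard = 1
  · obtain ⟨w, hW⟩ := Set.ncard_eq_one.mp hnc
    have htri : G.dist u v ≤ G.dist u w + G.dist w v := hconn.dist_triangle
    rw [epsilon_eq_one hW, level_eq_dist_of_weightCenters_eq hW,
      level_eq_dist_of_weightCenters_eq hW, dist_comm (u := v)]
    omega
  · obtain ⟨cu, hcu, hu⟩ := exists_level_eq_dist (G := G) u
    obtain ⟨cv, hcv, hv⟩ := exists_level_eq_dist (G := G) v
    have htri₁ : G.dist u v ≤ G.dist u cv + G.dist cv v := hconn.dist_triangle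
    have htri₂ : G.dist u cv ≤ G.dist u cu + G.dist cu cv := hconn.dist_triangle
    have hcc := dist_le_one_of_mem_weightCenters hT hcu hcv
    rw [dist_comm (u := cv)] at htri₁
    simp only [epsilon, hnc, if_false]
    omega

lemma epsilon_le_level_add_level (hconn : G.Connected) {u v : V} (hne : u ≠ v) :
    epsilon G ≤ level G u + level G v := by
  unfold epsilon
  split_ifs with hnc
  · obtain ⟨w, hW⟩ := Set.ncard_eq_one.mp hnc
    by_contra! h
    have hu := (level_eq_zero_iff hconn (u := u)).mp (by omega)
    have hv := (level_eq_zero_iff hconn (u := v)).mp (by omega)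
    rw [hW, Set.mem_singleton_iff] at hu hv
    exact hne (hu.trans hv.symm)
  · exact Nat.zero_le _

end Level

section Labeling

lemma sub_le_span (f : V → ℕ) (x y : V) : (f x : ℤ) - f y ≤ span f := by
  have : ((f x : ℤ) - f y).natAbs ≤ span f :=
    le_sup (f := fun p : V × V => ((f p.1 : ℤ) - f p.2).natAbs) (mem_univ (x, y))
  exact Int.le_natAbs.trans (by exact_mod_cast this)

lemma exists_isRadioLabeling_span_eq (G : SimpleGraph V) :
    ∃ f, IsRadioLabeling G f ∧ span f = radioNumber G := by
  let e := Fintype.equivFin V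
  have hspread : IsRadioLabeling G fun v => (G.diam + 1) * e v := by
    intro x y hxy
    have hne : (e x : ℤ) ≠ e y := by
      rw [Ne, Nat.cast_inj, Fin.val_inj]
      exact e.injective.ne hxy
    have : ((((G.diam + 1) * e x : ℕ) : ℤ) - ((G.diam + 1) * e y : ℕ)).natAbs =
        (G.diam + 1) * ((e x : ℤ) - e y).natAbs := by
      push_cast
      rw [← mul_sub, Int.natAbs_mul]
      rfl
    rw [this]
    have : 1 ≤ ((e x : ℤ) - e y).natAbs := by omega
    nlinarith
  exact Nat.sInf_mem (s := {n | ∃ f, IsRadioLabeling G f ∧ span f = n}) ⟨_, _, hspread, rfl⟩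

lemma IsRadioLabeling.injective {f : V → ℕ} (hf : IsRadioLabeling G f) (hG : G.ediam ≠ ⊤) :
    Function.Injective f := by
  intro x y hxy
  by_contra hne
  have hradio := hf x y hne
  rw [hxy, sub_self, Int.natAbs_zero, add_zero] at hradio
  have := dist_le_diam (u := x) (v := y) hG
  omega

lemma exists_bijOn_strictMonoOn_comp {α : Type*} [LinearOrder α] {f : V → α}
    (hf : Function.Injective f) {N : ℕ} (hN : Fintype.card V = N + 1) :
    ∃ u : ℕ → V, Set.BijOn u (Set.Iic N) Set.univ ∧ StrictMonoOn (f ∘ u) (Set.Iic N) := by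
  let σ := (Fintype.equivFinOfCardEq hN).symm
  let e : Fin (N + 1) → V := σ ∘ Tuple.sort (f ∘ σ)
  have he : e.Bijective := σ.bijective.comp (Tuple.sort _).bijective
  have hmono : StrictMono (f ∘ e) :=
    (Tuple.monotone_sort (f ∘ σ)).strictMono_of_injective (hf.comp he.injective)
  let u : ℕ → V := fun i => e (Fin.ofNat (N + 1) i)
  have hu : ∀ i (hi : i ≤ N), u i = e ⟨i, Nat.lt_succ_of_le hi⟩ := fun i hi =>
    congrArg e (Fin.ext (Nat.mod_eq_of_lt (Nat.lt_succ_of_le hi)))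
  refine ⟨u, ⟨Set.mapsTo_univ _ _, fun i hi j hj hij => ?_, fun v _ => ?_⟩,
    fun i hi j hj hij => ?_⟩
  · rw [hu i hi, hu j hj] at hij
    exact congrArg Fin.val (he.injective hij)
  · obtain ⟨i, rfl⟩ := he.surjective v
    exact ⟨i, Nat.lt_succ_iff.mp i.2, by simpa using hu i (Nat.lt_succ_iff.mp i.2)⟩
  · simpa only [Function.comp_apply, hu i hi, hu j hj] using
      hmono (show (⟨i, _⟩ : Fin (N + 1)) < ⟨j, _⟩ from hij)

end Labeling

section OptimalOrder

variable {f : V → ℕ} {u : ℕ → V} {N : ℕ}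

lemma sum_range_add_add_eq_two_nsmul {M : Type*} [AddCommMonoid M] (g : ℕ → M) (m : ℕ) :
    ∑ t ∈ range m, (g t + g (t + 1)) + (g 0 + g m) = 2 • ∑ t ∈ range (m + 1), g t := by
  rw [sum_add_distrib, two_nsmul]
  nth_rw 2 [sum_range_succ']
  rw [sum_range_succ]
  abel

lemma sum_range_comp_eq_sum_of_bijOn {M : Type*} [AddCommMonoid M]
    (hu : Set.BijOn u (Set.Iic N) Set.univ) (g : V → M) :
    ∑ t ∈ range (N + 1), g (u t) = ∑ v, g v := by
  have hrange : (range (N + 1) : Set ℕ) = Set.Iic N := by ext; simp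
  exact sum_nbij u (fun _ _ => mem_univ _) (hrange ▸ hu.injOn)
    (by simpa [hrange] using hu.surjOn) fun _ _ => rfl

lemma sum_range_level_add_level (hu : Set.BijOn u (Set.Iic N) Set.univ) :
    ∑ t ∈ range N, ((level G (u t) : ℤ) + level G (u (t + 1))) =
      2 * totalLevel G - level G (u 0) - level G (u N) := by
  have := sum_range_add_add_eq_two_nsmul (fun t => (level G (u t) : ℤ)) N
  rw [sum_range_comp_eq_sum_of_bijOn hu (fun v => (level G v : ℤ))] at this
  rw [totalLevel, Nat.cast_sum]
  linear_combination this

lemma IsRadioLabeling.diam_add_epsilon_le (hT : G.IsTree) (hf : IsRadioLabeling G f)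
    {x y : V} (hxy : x ≠ y) :
    (G.diam : ℤ) + epsilon G ≤ level G x + level G y + |(f x : ℤ) - f y| := by
  have := hf x y hxy
  have := dist_add_epsilon_le hT x y
  rw [← Int.natCast_natAbs]
  omega

/-- Summing the gap bound `f(u (t+1)) - f(u t) ≥ d + ε - L(u t) - L(u (t+1))`. -/
lemma mul_sub_sum_level_le_label_sub (hT : G.IsTree) (hf : IsRadioLabeling G f)
    (hu : Set.InjOn u (Set.Iic N)) (hfu : StrictMonoOn (f ∘ u) (Set.Iic N))
    {i j : ℕ} (hij : i ≤ j) (hj : j ≤ N) :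
    ((j : ℤ) - i) * (G.diam + epsilon G) -
        ∑ t ∈ Ico i j, ((level G (u t) : ℤ) + level G (u (t + 1))) ≤
      (f (u j) : ℤ) - f (u i) := by
  induction j, hij using Nat.le_induction with
  | base => simp
  | succ j hij ih =>
    have hjN : j ≤ N := by omega
    have hgap := hf.diam_add_epsilon_le hT
      (hu.ne (Set.mem_Iic.mpr hjN) (Set.mem_Iic.mpr hj) (Nat.succ_ne_self j).symm)
    have hlt : f (u j) < f (u (j + 1)) := hfu hjN hj (Nat.lt_succ_self j)
    rw [abs_sub_comm, abs_of_pos (sub_pos.mpr (by exact_mod_cast hlt))] at hgap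
    rw [sum_Ico_succ_top hij]
    push_cast
    linarith [ih hjN]

lemma level_add_level_eq_epsilon (hT : G.IsTree) (hf : IsRadioLabeling G f)
    (hu : Set.BijOn u (Set.Iic N) Set.univ) (hfu : StrictMonoOn (f ∘ u) (Set.Iic N))
    (hN : 1 ≤ N)
    (hspan : (span f : ℤ) ≤ N * (G.diam + epsilon G) - 2 * totalLevel G + epsilon G) :
    level G (u 0) + level G (u N) = epsilon G := by
  have hlow := mul_sub_sum_level_le_label_sub hT hf hu.injOn hfu (Nat.zero_le N) le_rfl
  rw [Nat.Ico_zero_eq_range, sum_range_level_add_level hu, Nat.cast_zero, sub_zero] at hlow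
  have hends := epsilon_le_level_add_level hT.connected
    (hu.injOn.ne (Set.mem_Iic.mpr (Nat.zero_le N)) (Set.mem_Iic.mpr le_rfl) (by omega))
  have := sub_le_span f (u N) (u 0)
  zify at hends ⊢
  linarith

lemma label_sub_le_of_span_le (hT : G.IsTree) (hf : IsRadioLabeling G f)
    (hu : Set.BijOn u (Set.Iic N) Set.univ) (hfu : StrictMonoOn (f ∘ u) (Set.Iic N))
    (hN : 1 ≤ N)
    (hspan : (span f : ℤ) ≤ N * (G.diam + epsilon G) - 2 * totalLevel G + epsilon G)
    {i j : ℕ} (hij : i ≤ j) (hj : j ≤ N) :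
    (f (u j) : ℤ) - f (u i) ≤
      ((j : ℤ) - i) * (G.diam + epsilon G) -
        ∑ t ∈ Ico i j, ((level G (u t) : ℤ) + level G (u (t + 1))) := by
  have hfirst := mul_sub_sum_level_le_label_sub hT hf hu.injOn hfu (Nat.zero_le i) (hij.trans hj)
  have hlast := mul_sub_sum_level_le_label_sub hT hf hu.injOn hfu hj le_rfl
  have htotal := sum_range_level_add_level (G := G) hu
  rw [← Nat.Ico_zero_eq_range, ← sum_Ico_consecutive _ (Nat.zero_le i) (hij.trans hj),
    ← sum_Ico_consecutive _ hij hj] at htotal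
  have hends := level_add_level_eq_epsilon hT hf hu hfu hN hspan
  have := sub_le_span f (u N) (u 0)
  zify at hends
  push_cast at hfirst hlast
  linarith

/-- Condition (b) on `u 0, …, u N`. -/
def DistanceCondition (G : SimpleGraph V) (u : ℕ → V) (N : ℕ) : Prop :=
  ∀ i j : ℕ, i < j → j ≤ N →
    (∑ t ∈ Finset.Ico i j, ((level G (u t) : ℤ) + (level G (u (t + 1)) : ℤ)))
        - ((j : ℤ) - (i : ℤ)) * ((G.diam : ℤ) + (epsilon G : ℤ)) + ((G.diam : ℤ) + 1)
      ≤ (G.dist (u i) (u j) : ℤ)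

lemma distanceCondition_of_span_le (hT : G.IsTree) (hf : IsRadioLabeling G f)
    (hu : Set.BijOn u (Set.Iic N) Set.univ) (hfu : StrictMonoOn (f ∘ u) (Set.Iic N))
    (hN : 1 ≤ N)
    (hspan : (span f : ℤ) ≤ N * (G.diam + epsilon G) - 2 * totalLevel G + epsilon G) :
    DistanceCondition G u N := by
  intro i j hij hj
  have hi : i ∈ Set.Iic N := Set.mem_Iic.mpr (hij.le.trans hj)
  have hupper := label_sub_le_of_span_le hT hf hu hfu hN hspan hij.le hj
  have hradio := hf (u i) (u j) (hu.injOn.ne hi (Set.mem_Iic.mpr hj) hij.ne)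
  have hlt : f (u i) < f (u j) := hfu hi hj hij
  zify at hradio
  rw [abs_sub_comm, abs_of_pos (sub_pos.mpr (by exact_mod_cast hlt))] at hradio
  linarith

lemma DistanceCondition.reverse (h : DistanceCondition G u N) :
    DistanceCondition G (fun i => u (N - i)) N := by
  intro i j hij hj
  have key := h (N - j) (N - i) (by omega) (by omega)
  have hreflect := sum_Ico_reflect (fun s => (level G (u s) : ℤ) + level G (u (s + 1))) i
    (show j ≤ N - 1 + 1 by omega)
  rw [show N - 1 + 1 = N by omega] at hreflect
  have hterm : ∀ t ∈ Ico i j, (level G (u (N - t)) : ℤ) + level G (u (N - (t + 1))) =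
      level G (u (N - 1 - t)) + level G (u (N - 1 - t + 1)) := by
    intro t ht
    rw [mem_Ico] at ht
    rw [show N - 1 - t + 1 = N - t by omega, show N - 1 - t = N - (t + 1) by omega, add_comm]
  rw [sum_congr rfl hterm, hreflect, dist_comm]
  rw [show ((N - i : ℕ) : ℤ) - (N - j : ℕ) = (j : ℤ) - i by omega] at key
  exact key

lemma weightCenters_endpoints_of_level_eq_zero (hconn : G.Connected) {x y : V} (hxy : x ≠ y)
    (hx : level G x = 0) (hsum : level G x + level G y = epsilon G) :
    (∀ w, weightCenters G = {w} → x = w ∧ G.Adj w y) ∧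
      (∀ w w', w ≠ w' → weightCenters G = {w, w'} → ({x, y} : Set V) = {w, w'}) := by
  have hx' := (level_eq_zero_iff hconn).mp hx
  refine ⟨fun w hW => ⟨?_, ?_⟩, fun w w' hne hW => ?_⟩
  · rwa [hW, Set.mem_singleton_iff] at hx'
  · rw [← dist_eq_one_iff_adj, dist_comm, ← level_eq_dist_of_weightCenters_eq hW]
    rw [epsilon_eq_one hW] at hsum
    omega
  · rw [epsilon_eq_zero hne hW] at hsum
    have hy := (level_eq_zero_iff hconn).mp (by omega : level G y = 0)
    rw [hW] at hx' hy
    rcases hx' with rfl | rfl <;> rcases hy with rfl | rfl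
    · exact absurd rfl hxy
    · rfl
    · exact Set.pair_comm _ _
    · exact absurd rfl hxy

end OptimalOrder

/-- necessity part of the Bantva–Vaidya–Zhou characterization.
If `rn(T) = (p-1)(d+ε) - 2 L(T) + ε` for a tree `T` with diameter `d ≥ 2`, then there is a
linear order `u 0, u 1, …, u (p-1)` of the vertices of `T` satisfying conditions (a) and (b). -/
theorem exists_order_of_radioNumber_tree_eq {V : Type*} [Fintype V]
    (G : SimpleGraph V) (hT : G.IsTree) (hd : 2 ≤ G.diam)
    (hrn : (radioNumber G : ℤ) =
      ((Fintype.card V : ℤ) - 1) * ((G.diam : ℤ) + (epsilon G : ℤ))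
        - 2 * (totalLevel G : ℤ) + (epsilon G : ℤ)) :
    ∃ u : ℕ → V,
      (∀ v : V, ∃! i : ℕ, i < Fintype.card V ∧ u i = v) ∧
      -- (a), one weight center case
      (∀ w : V, weightCenters G = {w} →
        u 0 = w ∧ G.Adj w (u (Fintype.card V - 1))) ∧
      -- (a), two weight centers case
      (∀ w w' : V, w ≠ w' → weightCenters G = {w, w'} →
        ({u 0, u (Fintype.card V - 1)} : Set V) = {w, w'}) ∧
      -- (b)
      (∀ i j : ℕ, i < j → j ≤ Fintype.card V - 1 →
        (∑ t ∈ Finset.Ico i j, ((level G (u t) : ℤ) + (level G (u (t + 1)) : ℤ)))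
            - ((j : ℤ) - (i : ℤ)) * ((G.diam : ℤ) + (epsilon G : ℤ)) + ((G.diam : ℤ) + 1)
          ≤ (G.dist (u i) (u j) : ℤ)) := by
  have hdiam : G.diam ≠ 0 := by omega
  have : Nontrivial V := nontrivial_of_diam_ne_zero hdiam
  obtain ⟨N, hN⟩ : ∃ N, Fintype.card V = N + 1 := Nat.exists_eq_add_one.mpr Fintype.card_pos
  have hN1 : 1 ≤ N := by have := Fintype.one_lt_card (α := V); omega
  obtain ⟨f, hf, hspan⟩ := exists_isRadioLabeling_span_eq G
  obtain ⟨u, hu, hfu⟩ :=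
    exists_bijOn_strictMonoOn_comp (hf.injective (ediam_ne_top_of_diam_ne_zero hdiam)) hN
  have hspan' : (span f : ℤ) ≤ N * (G.diam + epsilon G) - 2 * totalLevel G + epsilon G :=
    le_of_eq (by rw [hspan, hrn, hN]; push_cast; ring)
  have hends := level_add_level_eq_epsilon hT hf hu hfu hN1 hspan'
  have hb := distanceCondition_of_span_le hT hf hu hfu hN1 hspan'
  have hne : u 0 ≠ u N := hu.injOn.ne (Set.mem_Iic.mpr (Nat.zero_le N))
    (Set.mem_Iic.mpr le_rfl) (by omega)
  rw [hN, Nat.add_sub_cancel]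
  by_cases h0 : level G (u 0) = 0
  · obtain ⟨hone, htwo⟩ := weightCenters_endpoints_of_level_eq_zero hT.connected hne h0 hends
    exact ⟨u, hu.existsUnique_lt_add_one, hone, htwo, hb⟩
  · have hN0 : level G (u N) = 0 := by have := epsilon_le_one (G := G); omega
    obtain ⟨hone, htwo⟩ :=
      weightCenters_endpoints_of_level_eq_zero hT.connected hne.symm hN0 (by omega)
    refine ⟨fun i => u (N - i), hu.reverse_Iic.existsUnique_lt_add_one, ?_, ?_, hb.reverse⟩ <;>
      simpa only [Nat.sub_zero, Nat.sub_self]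

end Radio
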